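/- Suppose K = G ⋈ H is an internal Zappa–Szép product where G and H are cancellative and conical monoids acting on each other by bijections. Then the map G × H → K given by (g, h) ↦ g ∨ h is a poset isomorphism from (G, ≼_G) × (H, ≼_H) to (K, ≼_K). -/

import Mathlib

namespace ZSPaper

/-- Internal Zappa–Szép product: every element of `K` has a unique `GH`-decomposition
and a unique `HG`-decomposition. -/
structure ZS (K : Type*) [Monoid K] (G H : Submonoid K) : Prop where
  exGH : ∀ k : K, ∃! p : G × H, (p.1 : K) * (p.2 : K) = k
  exHG : ∀ k : K, ∃! p : H × G, (p.1 : K) * (p.2 : K) = k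

variable {K : Type*} [Monoid K] {G H : Submonoid K}

/-- `h ▷ g`, defined by `h * g = (h ▷ g) * (h ◁ g)`. -/
noncomputable def ZS.rtr (zs : ZS K G H) (h : H) (g : G) : G :=
  ((zs.exGH ((h : K) * (g : K))).choose).1

/-- `h ◁ g`, defined by `h * g = (h ▷ g) * (h ◁ g)`. -/
noncomputable def ZS.rtl (zs : ZS K G H) (h : H) (g : G) : H :=
  ((zs.exGH ((h : K) * (g : K))).choose).2

/-- `g ▶ h`, defined by `g * h = (g ▶ h) * (g ◀ h)`. -/
noncomputable def ZS.ltr (zs : ZS K G H) (g : G) (h : H) : H :=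
  ((zs.exHG ((g : K) * (h : K))).choose).1

/-- `g ◀ h`, defined by `g * h = (g ▶ h) * (g ◀ h)`. -/
noncomputable def ZS.ltl (zs : ZS K G H) (g : G) (h : H) : G :=
  ((zs.exHG ((g : K) * (h : K))).choose).2

/-- Right divisibility: `x` is a suffix of `y`. -/
def RDvd {M : Type*} [Monoid M] (x y : M) : Prop := ∃ u, y = u * x

/-- An atom of a monoid. -/
def MAtom {M : Type*} [Monoid M] (a : M) : Prop :=
  a ≠ 1 ∧ ∀ u v : M, a = u * v → u = 1 ∨ v = 1

/-- An atomic monoid: generated by its atoms, with bounded lengths of atomic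
decompositions. -/
def Atomic (M : Type*) [Monoid M] : Prop :=
  (∀ x : M, ∃ l : List M, (∀ a ∈ l, MAtom a) ∧ l.prod = x) ∧
  ∀ x : M, ∃ N : ℕ, ∀ l : List M, (∀ a ∈ l, MAtom a) → l.prod = x → l.length ≤ N

/-- `m` is the least common upper bound of the set `S` with respect to
left divisibility. -/
def IsDvdLUB {M : Type*} [Monoid M] (S : Set M) (m : M) : Prop :=
  (∀ s ∈ S, s ∣ m) ∧ ∀ n, (∀ s ∈ S, s ∣ n) → m ∣ n

/-- `m` is the least common upper bound of `x` and `y` with respect to left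
divisibility. -/
def IsDvdLCM {M : Type*} [Monoid M] (x y m : M) : Prop :=
  x ∣ m ∧ y ∣ m ∧ ∀ n, x ∣ n → y ∣ n → m ∣ n

/-- `d = Δ_x`, the least common upper bound of `{ y \ x : y ∈ M }`, where
`y * (y \ x) = y ∨ x`. -/
def IsDeltaOf {M : Type*} [Monoid M] (x d : M) : Prop :=
  IsDvdLUB {t : M | ∃ y, IsDvdLCM y x (y * t)} d

/-- A Garside structure on a monoid `M` with Garside element `Δ`. -/
structure GarsideStructure (M : Type*) [Monoid M] (Δ : M) : Prop where
  mul_left_cancel : ∀ a b c : M, a * b = a * c → b = c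
  mul_right_cancel : ∀ a b c : M, b * a = c * a → b = c
  atomic : Atomic M
  meet_left : ∀ x y : M, ∃ d, d ∣ x ∧ d ∣ y ∧ ∀ e, e ∣ x → e ∣ y → e ∣ d
  join_left : ∀ x y : M, ∃ m, x ∣ m ∧ y ∣ m ∧ ∀ n, x ∣ n → y ∣ n → m ∣ n
  meet_right : ∀ x y : M, ∃ d, RDvd d x ∧ RDvd d y ∧ ∀ e, RDvd e x → RDvd e y → RDvd e d
  join_right : ∀ x y : M, ∃ m, RDvd x m ∧ RDvd y m ∧ ∀ n, RDvd x n → RDvd y n → RDvd m n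
  balanced : ∀ x, x ∣ Δ ↔ RDvd x Δ
  div_finite : {x : M | x ∣ Δ}.Finite
  div_gen : Submonoid.closure {x : M | x ∣ Δ} = ⊤

end ZSPaper

open ZSPaper Function

/-!
When every `g ▶ ·` is a bijection of `H`, the element `g ∨ h = g p` with `g ▶ p = h` also
equals `h (g ◀ p)`; so `g` is its `G`-part in the `GH`-factorisation and `h` its `H`-part in
the `HG`-factorisation. Both parts are monotone for `≼`: in `g h u`, factor `u = a b` and push
`h` past `a`, and uniqueness of the factorisation exhibits `g` as a prefix. Conversely the
cocycle identities `(g a) ▶ p = g ▶ (a ▶ p)` and `g ▶ (p q) = (g ▶ p) ((g ◀ p) ▶ q)` give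
`g ∨ h ≼ g a ∨ h` and `g ∨ h ≼ g ∨ h b`. Bijectivity is uniqueness of `GH`-factorisations.
-/

namespace ZSPaper.ZS

variable {K : Type*} [Monoid K] {G H : Submonoid K}

lemma ltr_mul_ltl (zs : ZS K G H) (g : G) (h : H) :
    ((zs.ltr g h : H) : K) * (zs.ltl g h : K) = g * h :=
  (zs.exHG _).choose_spec.1

lemma rtr_mul_rtl (zs : ZS K G H) (h : H) (g : G) :
    ((zs.rtr h g : G) : K) * (zs.rtl h g : K) = h * g :=
  (zs.exGH _).choose_spec.1

lemma eq_of_mul_eq_mul_GH (zs : ZS K G H) {g₁ g₂ : G} {h₁ h₂ : H}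
    (e : (g₁ : K) * h₁ = g₂ * h₂) :
    g₁ = g₂ ∧ h₁ = h₂ :=
  Prod.ext_iff.1 ((zs.exGH _).unique (y₁ := (g₁, h₁)) (y₂ := (g₂, h₂)) e rfl)

lemma eq_of_mul_eq_mul_HG (zs : ZS K G H) {h₁ h₂ : H} {g₁ g₂ : G}
    (e : (h₁ : K) * g₁ = h₂ * g₂) :
    h₁ = h₂ ∧ g₁ = g₂ :=
  Prod.ext_iff.1 ((zs.exHG _).unique (y₁ := (h₁, g₁)) (y₂ := (h₂, g₂)) e rfl)

lemma ltr_mul_left (zs : ZS K G H) (g a : G) (p : H) :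
    zs.ltr (g * a) p = zs.ltr g (zs.ltr a p) := by
  refine (zs.eq_of_mul_eq_mul_HG (g₁ := zs.ltl (g * a) p)
    (g₂ := zs.ltl g (zs.ltr a p) * zs.ltl a p) ?_).1
  calc ((zs.ltr (g * a) p : H) : K) * (zs.ltl (g * a) p : K)
      = g * (a * p) := by rw [ltr_mul_ltl, Submonoid.coe_mul, mul_assoc]
    _ = g * (zs.ltr a p * zs.ltl a p : K) := by rw [ltr_mul_ltl]
    _ = (zs.ltr g (zs.ltr a p) * zs.ltl g (zs.ltr a p) : K) * zs.ltl a p := by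
        rw [← mul_assoc, ltr_mul_ltl]
    _ = _ := by rw [Submonoid.coe_mul, mul_assoc]

lemma ltr_mul_right (zs : ZS K G H) (g : G) (p q : H) :
    zs.ltr g (p * q) = zs.ltr g p * zs.ltr (zs.ltl g p) q := by
  refine (zs.eq_of_mul_eq_mul_HG (g₁ := zs.ltl g (p * q)) (g₂ := zs.ltl (zs.ltl g p) q) ?_).1
  calc ((zs.ltr g (p * q) : H) : K) * (zs.ltl g (p * q) : K)
      = (g * p : K) * q := by rw [ltr_mul_ltl, Submonoid.coe_mul, mul_assoc]
    _ = zs.ltr g p * (zs.ltl g p * q : K) := by rw [← ltr_mul_ltl, mul_assoc]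
    _ = zs.ltr g p * (zs.ltr (zs.ltl g p) q * zs.ltl (zs.ltl g p) q : K) := by
        rw [ltr_mul_ltl]
    _ = _ := by rw [Submonoid.coe_mul, mul_assoc]

lemma dvd_of_mul_dvd_mul_GH (zs : ZS K G H) {g g' : G} {h h' : H}
    (hd : (g : K) * h ∣ g' * h') : g ∣ g' := by
  obtain ⟨u, hu⟩ := hd
  obtain ⟨⟨a, b⟩, hab, -⟩ := zs.exGH u
  refine ⟨zs.rtr h a, (zs.eq_of_mul_eq_mul_GH (h₁ := h') (h₂ := zs.rtl h a * b) ?_).1⟩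
  calc (g' : K) * h' = g * (h * a) * b := by rw [hu, ← hab]; simp only [mul_assoc]
    _ = _ := by rw [← zs.rtr_mul_rtl]; simp only [Submonoid.coe_mul, mul_assoc]

lemma dvd_of_mul_dvd_mul_HG (zs : ZS K G H) {h h' : H} {g g' : G}
    (hd : (h : K) * g ∣ h' * g') : h ∣ h' := by
  obtain ⟨u, hu⟩ := hd
  obtain ⟨⟨b, a⟩, hba, -⟩ := zs.exHG u
  refine ⟨zs.ltr g b, (zs.eq_of_mul_eq_mul_HG (g₁ := g') (g₂ := zs.ltl g b * a) ?_).1⟩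
  calc (h' : K) * g' = h * (g * b) * a := by rw [hu, ← hba]; simp only [mul_assoc]
    _ = _ := by rw [← zs.ltr_mul_ltl]; simp only [Submonoid.coe_mul, mul_assoc]

-- The join `g ∨ h`: `invFun (zs.ltr g)` is the paper's `g⁻¹ ▶ ·`.
noncomputable def join (zs : ZS K G H) (g : G) (h : H) : K := g * (invFun (zs.ltr g) h : H)

section Bijective

variable {zs : ZS K G H}

lemma ltr_invFun (hbij : ∀ g, Bijective (zs.ltr g)) (g : G) (h : H) :
    zs.ltr g (invFun (zs.ltr g) h) = h :=
  rightInverse_invFun (hbij g).2 h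

lemma invFun_ltr (hbij : ∀ g, Bijective (zs.ltr g)) (g : G) (p : H) :
    invFun (zs.ltr g) (zs.ltr g p) = p :=
  leftInverse_invFun (hbij g).1 p

lemma invFun_ltr_mul_left (hbij : ∀ g, Bijective (zs.ltr g)) (g a : G) (h : H) :
    invFun (zs.ltr g) h = zs.ltr a (invFun (zs.ltr (g * a)) h) := by
  conv_lhs => rw [← ltr_invFun hbij (g * a) h, ltr_mul_left, invFun_ltr hbij]

lemma invFun_ltr_mul_right (hbij : ∀ g, Bijective (zs.ltr g)) (g : G) (h b : H) :
    invFun (zs.ltr g) (h * b) =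
      invFun (zs.ltr g) h * invFun (zs.ltr (zs.ltl g (invFun (zs.ltr g) h))) b := by
  conv_lhs => rw [← ltr_invFun hbij g h, ← ltr_invFun hbij (zs.ltl g (invFun (zs.ltr g) h)) b,
    ← ltr_mul_right, invFun_ltr hbij]

lemma join_eq_mul_ltl (hbij : ∀ g, Bijective (zs.ltr g)) (g : G) (h : H) :
    zs.join g h = h * zs.ltl g (invFun (zs.ltr g) h) := by
  rw [join, ← ltr_mul_ltl, ltr_invFun hbij]

lemma join_dvd_join_mul_left (hbij : ∀ g, Bijective (zs.ltr g)) (g a : G) (h : H) :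
    zs.join g h ∣ zs.join (g * a) h := by
  set p := invFun (zs.ltr (g * a)) h
  refine ⟨zs.ltl a p, ?_⟩
  rw [join, join, invFun_ltr_mul_left hbij g a h, Submonoid.coe_mul, mul_assoc, mul_assoc,
    ← ltr_mul_ltl]

lemma join_dvd_join_mul_right (hbij : ∀ g, Bijective (zs.ltr g)) (g : G) (h b : H) :
    zs.join g h ∣ zs.join g (h * b) := by
  rw [join, join, invFun_ltr_mul_right hbij, Submonoid.coe_mul, ← mul_assoc]
  exact dvd_mul_right _ _

theorem join_dvd_join_iff (hbij : ∀ g, Bijective (zs.ltr g)) {g g' : G} {h h' : H} :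
    zs.join g h ∣ zs.join g' h' ↔ g ∣ g' ∧ h ∣ h' := by
  refine ⟨fun hd => ⟨zs.dvd_of_mul_dvd_mul_GH hd, ?_⟩, ?_⟩
  · rw [join_eq_mul_ltl hbij, join_eq_mul_ltl hbij] at hd
    exact zs.dvd_of_mul_dvd_mul_HG hd
  · rintro ⟨⟨a, rfl⟩, ⟨b, rfl⟩⟩
    exact (join_dvd_join_mul_left hbij g a h).trans (join_dvd_join_mul_right hbij _ h b)

theorem join_bijective (hbij : ∀ g, Bijective (zs.ltr g)) :
    Bijective (fun p : G × H => zs.join p.1 p.2) := by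
  refine ⟨?_, fun k => ?_⟩
  · rintro ⟨g₁, h₁⟩ ⟨g₂, h₂⟩ e
    obtain ⟨rfl, e⟩ := zs.eq_of_mul_eq_mul_GH e
    rw [← ltr_invFun hbij g₁ h₁, e, ltr_invFun hbij]
  · obtain ⟨⟨g, p⟩, hk, -⟩ := zs.exGH k
    exact ⟨(g, zs.ltr g p), by
      show zs.join g (zs.ltr g p) = k
      rw [join, invFun_ltr hbij, hk]⟩

end Bijective

end ZSPaper.ZS

theorem stmt15_general {K : Type*} [Monoid K] {G H : Submonoid K} (zs : ZS K G H)
    (hb₄ : ∀ g : G, Function.Bijective (zs.ltr g)) :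
    Function.Bijective
      (fun p : G × H => (p.1 : K) * ((invFun (zs.ltr p.1) p.2 : H) : K)) ∧
    ∀ p q : G × H,
      (p.1 ∣ q.1 ∧ p.2 ∣ q.2) ↔
        ((p.1 : K) * ((invFun (zs.ltr p.1) p.2 : H) : K)) ∣
          ((q.1 : K) * ((invFun (zs.ltr q.1) q.2 : H) : K)) :=
  ⟨ZS.join_bijective hb₄, fun _ _ => (ZS.join_dvd_join_iff hb₄).symm⟩

theorem stmt15 {K : Type*} [Monoid K] {G H : Submonoid K} (zs : ZS K G H)
    (hGl : ∀ a b c : G, a * b = a * c → b = c)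
    (hGr : ∀ a b c : G, b * a = c * a → b = c)
    (hHl : ∀ a b c : H, a * b = a * c → b = c)
    (hHr : ∀ a b c : H, b * a = c * a → b = c)
    (hGcon : ∀ a b : G, a * b = 1 → a = 1 ∧ b = 1)
    (hHcon : ∀ a b : H, a * b = 1 → a = 1 ∧ b = 1)
    (hb₁ : ∀ h : H, Function.Bijective (zs.rtr h))
    (hb₂ : ∀ h : H, Function.Bijective (fun g : G => zs.ltl g h))
    (hb₃ : ∀ g : G, Function.Bijective (fun h : H => zs.rtl h g))
    (hb₄ : ∀ g : G, Function.Bijective (zs.ltr g)) :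
    Function.Bijective
      (fun p : G × H => (p.1 : K) * ((invFun (zs.ltr p.1) p.2 : H) : K)) ∧
    ∀ p q : G × H,
      (p.1 ∣ q.1 ∧ p.2 ∣ q.2) ↔
        ((p.1 : K) * ((invFun (zs.ltr p.1) p.2 : H) : K)) ∣
          ((q.1 : K) * ((invFun (zs.ltr q.1) q.2 : H) : K)) :=
  stmt15_general zs hb₄
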